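/- Let $\nu$ be the counting measure of a summable positive non-increasing sequence $(p_j)$, i.e. $\nu = \sum_j \delta_{p_j}$, and let $V(t) = \int_0^\infty (e^{-tx} - e^{-2tx})\,\nu(dx)$. Then $V(t) = t \int_0^\infty e^{-tx}\, \Delta\nu(x)\, dx$ for all $t \ge 0$, where $\Delta\nu(x) = \#\{j : x/2 < p_j \le x\}$. -/

import Mathlib

/-!
Since `x / 2 < p j ≤ x` means `x ∈ [p j, 2 p j)`, the counting function is `∑ⱼ 1[p j, 2 p j)`, so the
right-hand side is `t ∑ⱼ ∫_{p j}^{2 p j} e^{-tx} dx = ∑ⱼ (e^{-t p j} - e^{-2 t p j})`. Sum and integral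
may be interchanged because the `j`-th integral is at most `p j` and `∑ⱼ p j < ∞`.
-/

open Real Set MeasureTheory Filter Topology

lemma mem_Ico_two_mul_iff {a x : ℝ} : x ∈ Ico a (2 * a) ↔ x / 2 < a ∧ a ≤ x := by
  constructor <;> rintro ⟨h₁, h₂⟩ <;> constructor <;> linarith

lemma Summable.finite_setOf_lt {ι : Type*} {p : ι → ℝ} (hp : Summable p) {c : ℝ} (hc : 0 < c) :
    {i | c < p i}.Finite :=
  (eventually_cofinite.mp (hp.tendsto_cofinite_zero.eventually (gt_mem_nhds hc))).subset
    fun _ hi => not_lt.mpr hi.le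

lemma tsum_indicator_apply_eq_ncard_mul {ι α : Type*} (s : ι → Set α) (g : α → ℝ) {x : α}
    (hx : {i | x ∈ s i}.Finite) :
    ∑' i, (s i).indicator g x = {i | x ∈ s i}.ncard * g x := by
  rw [tsum_eq_sum (s := hx.toFinset) fun i hi => indicator_of_notMem (by simpa using hi) g,
    Finset.sum_congr rfl fun i hi => indicator_of_mem (by simpa using hi) g, Finset.sum_const,
    nsmul_eq_mul, ncard_eq_toFinset_card _ hx]

lemma exp_neg_sub_exp_neg_two_mul_le {u : ℝ} (hu : 0 ≤ u) : exp (-u) - exp (-(2 * u)) ≤ u := by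
  have h₁ := add_one_le_exp (-u)
  have h₂ : exp (-(2 * u)) = exp (-u) * exp (-u) := by rw [← exp_add]; ring_nf
  have h₃ := exp_le_one_iff.mpr (neg_nonpos.mpr hu)
  nlinarith [exp_pos (-u)]

lemma integral_Ico_exp_neg_mul {t : ℝ} (ht : t ≠ 0) {a b : ℝ} (hab : a ≤ b) :
    ∫ x in Ico a b, exp (-(t * x)) = (exp (-(t * a)) - exp (-(t * b))) / t := by
  have hderiv (x : ℝ) : HasDerivAt (fun y => -exp (-(t * y)) / t) (exp (-(t * x))) x := by
    refine (((hasDerivAt_id' x).const_mul t).fun_neg.exp.fun_neg.div_const t).congr_deriv ?_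
    field_simp
  have hcont : Continuous fun x => exp (-(t * x)) := by fun_prop
  rw [integral_Ico_eq_integral_Ioo, ← integral_Ioc_eq_integral_Ioo,
    ← intervalIntegral.integral_of_le hab,
    intervalIntegral.integral_eq_sub_of_hasDerivAt (fun x _ => hderiv x)
      (hcont.intervalIntegrable a b)]
  ring

lemma integral_Ioi_indicator_Ico_exp_neg_mul {t a : ℝ} (ht : t ≠ 0) (ha : 0 < a) :
    ∫ x in Ioi 0, (Ico a (2 * a)).indicator (fun x => exp (-(t * x))) x =
      (exp (-(t * a)) - exp (-(2 * t * a))) / t := by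
  have hsub : Ico a (2 * a) ⊆ Ioi 0 := fun x hx => ha.trans_le hx.1
  rw [integral_indicator measurableSet_Ico, Measure.restrict_restrict measurableSet_Ico,
    inter_eq_self_of_subset_left hsub, integral_Ico_exp_neg_mul ht (by linarith)]
  ring_nf

lemma hasSum_integral_Ioi_indicator_Ico_exp_neg_mul {ι : Type*} [Countable ι] {p : ι → ℝ}
    (hpos : ∀ i, 0 < p i) (hsum : Summable p) {t : ℝ} (ht : 0 < t) :
    HasSum (fun i => (exp (-(t * p i)) - exp (-(2 * t * p i))) / t)
      (∫ x in Ioi 0, ∑' i, (Ico (p i) (2 * p i)).indicator (fun x => exp (-(t * x))) x) := by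
  set f : ι → ℝ → ℝ := fun i => (Ico (p i) (2 * p i)).indicator fun x => exp (-(t * x))
  have hf_int (i : ι) : ∫ x in Ioi 0, f i x = (exp (-(t * p i)) - exp (-(2 * t * p i))) / t :=
    integral_Ioi_indicator_Ico_exp_neg_mul ht.ne' (hpos i)
  have hf_nonneg (i : ι) (x : ℝ) : 0 ≤ f i x := indicator_nonneg (fun _ _ => (exp_pos _).le) x
  have hf_integrable (i : ι) : Integrable (f i) (volume.restrict (Ioi 0)) :=
    ((continuous_exp.comp (by fun_prop : Continuous fun x : ℝ => -(t * x))).integrableOn_Icc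
      |>.mono_set Ico_subset_Icc_self).integrable_indicator measurableSet_Ico |>.restrict
  have hbound (i : ι) : (exp (-(t * p i)) - exp (-(2 * t * p i))) / t ≤ p i := by
    rw [div_le_iff₀ ht, mul_assoc, mul_comm (p i)]
    exact exp_neg_sub_exp_neg_two_mul_le (mul_nonneg ht.le (hpos i).le)
  have hsum_norm : Summable fun i => ∫ x in Ioi 0, ‖f i x‖ := by
    simp_rw [fun i x => norm_of_nonneg (hf_nonneg i x), hf_int]
    exact hsum.of_nonneg_of_le (fun i => hf_int i ▸ setIntegral_nonneg measurableSet_Ioi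
      fun x _ => hf_nonneg i x) hbound
  simpa only [hf_int] using hasSum_integral_of_summable_integral_norm hf_integrable hsum_norm

theorem stmt5 (p : ℕ → ℝ) (hpos : ∀ j, 0 < p j)
    (hsum : Summable p) :
    ∀ t : ℝ, 0 ≤ t →
      (∑' j : ℕ, (Real.exp (-(t * p j)) - Real.exp (-(2 * t * p j)))) =
        t * ∫ x in Set.Ioi (0 : ℝ),
          Real.exp (-(t * x)) * (({j : ℕ | x / 2 < p j ∧ p j ≤ x}).ncard : ℝ) := by
  intro t ht
  rcases ht.eq_or_lt with rfl | ht
  · simp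
  have hcount (x : ℝ) (hx : x ∈ Ioi 0) :
      exp (-(t * x)) * ({j | x / 2 < p j ∧ p j ≤ x}.ncard : ℝ) =
        ∑' j, (Ico (p j) (2 * p j)).indicator (fun x => exp (-(t * x))) x := by
    simp_rw [← mem_Ico_two_mul_iff]
    have hfin : {j | x ∈ Ico (p j) (2 * p j)}.Finite :=
      (hsum.finite_setOf_lt (half_pos hx)).subset fun j hj => (mem_Ico_two_mul_iff.mp hj).1
    rw [tsum_indicator_apply_eq_ncard_mul _ _ hfin, mul_comm]
  rw [setIntegral_congr_fun measurableSet_Ioi hcount,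
    ← (hasSum_integral_Ioi_indicator_Ico_exp_neg_mul hpos hsum ht).tsum_eq, ← tsum_mul_left]
  exact tsum_congr fun j => (mul_div_cancel₀ _ ht.ne').symm
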